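/- Soundness of the goal-driven coupling rules for commutativity: for a commutative binary symbol f (with f(x,y) =_C f(y,x)), if s₀ ⊴_C t₁ and s₁ ⊴_C t₀ then f(s₀,s₁) ⊴_C f(t₀,t₁), where ⊴_C = (=_C) ∘ (⊴) ∘ (=_C). -/

import Mathlib

/-- Terms with variables, atoms, and a binary symbol `f`. -/
inductive T2 (α ν : Type) : Type
  | var : ν → T2 α ν
  | atom : α → T2 α ν
  | f : T2 α ν → T2 α ν → T2 α ν

/-- Variable-extended homeomorphic embedding: Variable, Diving, Coupling. -/
inductive Emb {α ν : Type} : T2 α ν → T2 α ν → Prop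
  | var (x y : ν) : Emb (.var x) (.var y)
  | atom (a : α) : Emb (.atom a) (.atom a)
  | diveL {s t₁ t₂ : T2 α ν} : Emb s t₁ → Emb s (.f t₁ t₂)
  | diveR {s t₁ t₂ : T2 α ν} : Emb s t₂ → Emb s (.f t₁ t₂)
  | couple {s₁ s₂ t₁ t₂ : T2 α ν} : Emb s₁ t₁ → Emb s₂ t₂ → Emb (.f s₁ s₂) (.f t₁ t₂)

/-- The congruence `=_C` generated by commutativity of `f`. -/
inductive CEq {α ν : Type} : T2 α ν → T2 α ν → Prop
  | refl (t : T2 α ν) : CEq t t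
  | symm {s t : T2 α ν} : CEq s t → CEq t s
  | trans {s t u : T2 α ν} : CEq s t → CEq t u → CEq s u
  | congr {s s' t t' : T2 α ν} : CEq s s' → CEq t t' → CEq (.f s t) (.f s' t')
  | comm (x y : T2 α ν) : CEq (.f x y) (.f y x)

/-- `⊴_C = (=_C) ∘ (⊴) ∘ (=_C)`. -/
def EmbC {α ν : Type} (s t : T2 α ν) : Prop :=
  ∃ s' t', CEq s s' ∧ Emb s' t' ∧ CEq t' t

theorem EmbC.couple {α ν : Type} {s₀ s₁ t₀ t₁ : T2 α ν}
    (h₀ : EmbC s₀ t₀) (h₁ : EmbC s₁ t₁) : EmbC (T2.f s₀ s₁) (T2.f t₀ t₁) := by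
  obtain ⟨s₀', t₀', hs₀, hemb₀, ht₀⟩ := h₀
  obtain ⟨s₁', t₁', hs₁, hemb₁, ht₁⟩ := h₁
  exact ⟨.f s₀' s₁', .f t₀' t₁', .congr hs₀ hs₁, .couple hemb₀ hemb₁, .congr ht₀ ht₁⟩

theorem EmbC.trans_cEq {α ν : Type} {s t u : T2 α ν} (h : EmbC s t) (htu : CEq t u) :
    EmbC s u := by
  obtain ⟨s', t', hs, hemb, ht⟩ := h
  exact ⟨s', t', hs, hemb, ht.trans htu⟩

/-- Soundness of the goal-driven Coupling_C rule. -/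
theorem couplingC_sound {α ν : Type} {s₀ s₁ t₀ t₁ : T2 α ν}
    (h₁ : EmbC s₀ t₁) (h₂ : EmbC s₁ t₀) :
    EmbC (T2.f s₀ s₁) (T2.f t₀ t₁) :=
  (h₁.couple h₂).trans_cEq (.comm t₁ t₀)
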